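/- The closure of the convex hull of F equals the closure of the convex hull of the image P_c(ℝⁿ) = {P_c(x) : x ∈ ℝⁿ}, and both equal the intersection ⋂_{λ ∈ Λ₁} H_λ of the half-spaces H_λ over all λ ∈ Λ₁. -/

import Mathlib

open Matrix Set

noncomputable section

/-- `A` is irreducible: for every nonempty proper subset `α` of the index set,
the submatrix `A[α, αᶜ]` is not the zero matrix. -/
def IsIrred {k : ℕ} (A : Matrix (Fin k) (Fin k) ℝ) : Prop :=
  ∀ α : Finset (Fin k), α.Nonempty → α ≠ Finset.univ → ∃ i ∈ α, ∃ j ∈ αᶜ, A i j ≠ 0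

/-- `A` is a Z-matrix: off-diagonal entries are nonpositive. -/
def IsZmat {k : ℕ} (A : Matrix (Fin k) (Fin k) ℝ) : Prop :=
  ∀ i j, i ≠ j → A i j ≤ 0

/-- `A` is an M-matrix: a Z-matrix all of whose eigenvalues have nonnegative real part. -/
def IsMmat {k : ℕ} (A : Matrix (Fin k) (Fin k) ℝ) : Prop :=
  IsZmat A ∧ ∀ μ ∈ spectrum ℂ (A.map (Complex.ofReal)), 0 ≤ μ.re

/-- `A` is a nonsingular M-matrix: a Z-matrix all of whose eigenvalues have positive real part. -/
def IsNonsingMmat {k : ℕ} (A : Matrix (Fin k) (Fin k) ℝ) : Prop :=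
  IsZmat A ∧ ∀ μ ∈ spectrum ℂ (A.map (Complex.ofReal)), 0 < μ.re

/-- `P_c(x) = [x] Y (V* − x)`. -/
def Pc {k : ℕ} (Y : Matrix (Fin k) (Fin k) ℝ) (Vs : Fin k → ℝ) (x : Fin k → ℝ) : Fin k → ℝ :=
  Matrix.diagonal x *ᵥ (Y *ᵥ (Vs - x))

/-- Jacobian of `P_c` at `x`: `J(x) = [Y(V* − x)] − [x] Y`. -/
def Jmat {k : ℕ} (Y : Matrix (Fin k) (Fin k) ℝ) (Vs : Fin k → ℝ) (x : Fin k → ℝ) :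
    Matrix (Fin k) (Fin k) ℝ :=
  Matrix.diagonal (Y *ᵥ (Vs - x)) - Matrix.diagonal x * Y

/-- long-term voltage stable operating points. -/
def Dset {k : ℕ} (Y : Matrix (Fin k) (Fin k) ℝ) (Vs : Fin k → ℝ) : Set (Fin k → ℝ) :=
  {x | (∀ i, 0 < x i) ∧ IsUnit (Jmat Y Vs x).det ∧ ∀ i j, (Jmat Y Vs x)⁻¹ i j < 0}

/-- feasible power demands. -/
def Fset {k : ℕ} (Y : Matrix (Fin k) (Fin k) ℝ) (Vs : Fin k → ℝ) : Set (Fin k → ℝ) :=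
  {P | ∃ x, (∀ i, 0 < x i) ∧ Pc Y Vs x = P}

/-- `h(λ) = (1/2)([λ] Y + Y [λ])`. -/
def hmat {k : ℕ} (Y : Matrix (Fin k) (Fin k) ℝ) (l : Fin k → ℝ) : Matrix (Fin k) (Fin k) ℝ :=
  (1/2 : ℝ) • (Matrix.diagonal l * Y + Y * Matrix.diagonal l)

/-- `Λ₁ = {λ ∈ Λ : λ > 0, 1ᵀλ = 1}`. -/
def Lam1 {k : ℕ} (Y : Matrix (Fin k) (Fin k) ℝ) : Set (Fin k → ℝ) :=
  {l | (hmat Y l).PosDef ∧ (∀ i, 0 < l i) ∧ ∑ i, l i = 1}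

/-- `φ(λ) = (1/2) h(λ)⁻¹ [λ] I*` where `I* = Y V*`. -/
def phiv {k : ℕ} (Y : Matrix (Fin k) (Fin k) ℝ) (Vs : Fin k → ℝ) (l : Fin k → ℝ) : Fin k → ℝ :=
  (1/2 : ℝ) • ((hmat Y l)⁻¹ *ᵥ (Matrix.diagonal l *ᵥ (Y *ᵥ Vs)))

/-- `‖x‖_{h(λ)}²  = xᵀ h(λ) x`. -/
def qnorm {k : ℕ} (Y : Matrix (Fin k) (Fin k) ℝ) (l x : Fin k → ℝ) : ℝ :=
  x ⬝ᵥ (hmat Y l *ᵥ x)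

/-- The half-space `H_λ`. -/
def Hset {k : ℕ} (Y : Matrix (Fin k) (Fin k) ℝ) (Vs : Fin k → ℝ) (l : Fin k → ℝ) :
    Set (Fin k → ℝ) :=
  {y | l ⬝ᵥ y ≤ qnorm Y l (phiv Y Vs l)}

/-!
Completing the square in the `h(λ)`-norm gives `λ ⬝ P_c(x) = ‖φ(λ)‖² - ‖x - φ(λ)‖²`, so
`P_c(ℝⁿ) ⊆ H_λ`. Conversely, let a half-space `c ⬝ P ≤ u` contain `F`. By continuity it contains
`P_c(x)` for all `x ≥ 0`, and along `x = t v`, `t → ∞`, this forces `vᵀ h(c) v ≥ 0` for `v ≥ 0`;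
hence `c ≥ 0` and, `h(c)` being a Z-matrix, `h(c)` is positive semidefinite. For `t > 0`,
`λ = c + t 𝟙` is positive with `h(λ)` positive definite, and `φ(λ) ≥ 0` because `h(λ)` is a
Z-matrix. So `φ(λ)` is a limit of feasible voltages and `‖φ(λ)‖²_{h(λ)} ≤ u + t ‖φ(𝟙)‖²_{Y}`.
Since `H_λ` is invariant under scaling `λ`, every `y ∈ ⋂ H_λ` satisfies
`c ⬝ y + t 𝟙 ⬝ y ≤ u + t ‖φ(𝟙)‖²_{Y}`; letting `t → 0` gives `c ⬝ y ≤ u`.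
-/

open Filter Topology

variable {k : ℕ}

section ZMatrix

variable {M : Matrix (Fin k) (Fin k) ℝ}

theorem IsZmat.nonneg_of_mulVec_nonneg (hZ : IsZmat M) (hM : M.PosDef) {x : Fin k → ℝ}
    (hx : 0 ≤ M *ᵥ x) : 0 ≤ x := by
  -- test `M x ≥ 0` against `x⁻`: the sign pattern of `M` makes `x⁻ ⬝ M x⁺ ≤ 0`
  have hcross : x⁻ ⬝ᵥ M *ᵥ x⁺ ≤ 0 := by
    simp only [dotProduct, mulVec, Finset.mul_sum]
    refine Finset.sum_nonpos fun i _ => Finset.sum_nonpos fun j _ => ?_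
    simp only [Pi.posPart_apply, Pi.negPart_apply]
    rcases eq_or_ne i j with rfl | hij
    · rcases le_total (x i) 0 with hxi | hxi
      · simp [posPart_eq_zero.mpr hxi]
      · simp [negPart_eq_zero.mpr hxi]
    · nlinarith [hZ i j hij, mul_nonneg (negPart_nonneg (x i)) (posPart_nonneg (x j))]
  have hneg : x⁻ ⬝ᵥ M *ᵥ x⁻ ≤ 0 := by
    have h := dotProduct_nonneg_of_nonneg (negPart_nonneg x) hx
    rw [← congrArg (M *ᵥ ·) (posPart_sub_negPart x), mulVec_sub, dotProduct_sub] at h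
    linarith
  by_contra hx'
  have h := hM.dotProduct_mulVec_pos (mt negPart_eq_zero.mp hx')
  rw [star_trivial] at h
  linarith

theorem IsZmat.dotProduct_mulVec_nonneg_of_copositive (hZ : IsZmat M)
    (hcop : ∀ v, 0 ≤ v → 0 ≤ v ⬝ᵥ M *ᵥ v) (v : Fin k → ℝ) : 0 ≤ v ⬝ᵥ M *ᵥ v := by
  refine (hcop |v| (abs_nonneg v)).trans ?_
  simp only [dotProduct, mulVec, Finset.mul_sum, Pi.abs_apply]
  refine Finset.sum_le_sum fun i _ => Finset.sum_le_sum fun j _ => ?_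
  rcases eq_or_ne i j with rfl | hij
  · rw [mul_left_comm, abs_mul_abs_self, mul_left_comm]
  · nlinarith [hZ i j hij, abs_mul (v i) (v j), le_abs_self (v i * v j)]

end ZMatrix

theorem Matrix.IsSymm.dotProduct_mulVec_comm {ι R : Type*} [Fintype ι] [CommSemiring R]
    {A : Matrix ι ι R} (hA : A.IsSymm) (u w : ι → R) : u ⬝ᵥ A *ᵥ w = w ⬝ᵥ A *ᵥ u := by
  rw [dotProduct_mulVec, ← mulVec_transpose, hA, dotProduct_comm]

theorem exists_dotProduct_eq {ι R : Type*} [Fintype ι] [CommSemiring R] (f : (ι → R) →ₗ[R] R) :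
    ∃ c, ∀ z, f z = c ⬝ᵥ z := by
  classical
  exact ⟨fun i => f fun j => if i = j then 1 else 0, fun z => by
    simp [f.pi_apply_eq_sum_univ z, dotProduct, mul_comm]⟩

theorem nonneg_of_forall_mul_sub_mul_sq_le {a b u : ℝ} (h : ∀ t > 0, b * t - a * t ^ 2 ≤ u) :
    0 ≤ a := by
  by_contra! ha
  have ha' : a ≠ 0 := ha.ne
  -- at `t = 1 + (|b| + |u|) / (-a)` we get `-a t = |b| + |u| - a`, and `t ≥ 1`
  set t := 1 + (|b| + |u|) / -a
  have ht : 1 ≤ t := le_add_of_nonneg_right (by have := neg_pos.2 ha; positivity)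
  have hat : -a * t = |b| + |u| - a := by simp only [t]; field_simp; ring
  have := h t (by linarith)
  nlinarith [neg_abs_le b, le_abs_self u, abs_nonneg u]

section PowerFlow

variable {Y : Matrix (Fin k) (Fin k) ℝ} {Vs l : Fin k → ℝ}

theorem hmat_apply (Y : Matrix (Fin k) (Fin k) ℝ) (l : Fin k → ℝ) (i j : Fin k) :
    hmat Y l i j = (l i + l j) / 2 * Y i j := by
  simp only [hmat, Matrix.smul_apply, Matrix.add_apply, diagonal_mul, mul_diagonal, smul_eq_mul]
  ring

theorem hmat_add (Y : Matrix (Fin k) (Fin k) ℝ) (l l' : Fin k → ℝ) :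
    hmat Y (l + l') = hmat Y l + hmat Y l' := by
  ext i j
  simp only [hmat_apply, Matrix.add_apply, Pi.add_apply]
  ring

theorem hmat_smul (Y : Matrix (Fin k) (Fin k) ℝ) (s : ℝ) (l : Fin k → ℝ) :
    hmat Y (s • l) = s • hmat Y l := by
  ext i j
  simp only [hmat_apply, Matrix.smul_apply, Pi.smul_apply, smul_eq_mul]
  ring

theorem hmat_one (Y : Matrix (Fin k) (Fin k) ℝ) : hmat Y 1 = Y := by
  ext i j
  simp [hmat_apply]

theorem isZmat_hmat (hY : IsZmat Y) (hl : 0 ≤ l) : IsZmat (hmat Y l) := fun i j hij => by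
  rw [hmat_apply]
  exact mul_nonpos_of_nonneg_of_nonpos (div_nonneg (add_nonneg (hl i) (hl j)) zero_le_two)
    (hY i j hij)

theorem isSymm_hmat (hY : Y.IsSymm) (l : Fin k → ℝ) : (hmat Y l).IsSymm := by
  ext i j
  rw [transpose_apply, hmat_apply, hmat_apply, hY.apply i j, add_comm]

theorem qnorm_smul_left (Y : Matrix (Fin k) (Fin k) ℝ) (s : ℝ) (l x : Fin k → ℝ) :
    qnorm Y (s • l) x = s * qnorm Y l x := by
  rw [qnorm, hmat_smul, smul_mulVec, dotProduct_smul, smul_eq_mul, qnorm]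

theorem qnorm_smul_right (Y : Matrix (Fin k) (Fin k) ℝ) (l : Fin k → ℝ) (t : ℝ) (x : Fin k → ℝ) :
    qnorm Y l (t • x) = t ^ 2 * qnorm Y l x := by
  simp only [qnorm, mulVec_smul, dotProduct_smul, smul_dotProduct, smul_eq_mul]
  ring

theorem qnorm_single (Y : Matrix (Fin k) (Fin k) ℝ) (l : Fin k → ℝ) (i : Fin k) :
    qnorm Y l (Pi.single i 1) = l i * Y i i := by
  simp [qnorm, hmat_apply]

theorem qnorm_sub (hY : Y.IsSymm) (l x y : Fin k → ℝ) :
    qnorm Y l (x - y) = qnorm Y l x - 2 * (x ⬝ᵥ hmat Y l *ᵥ y) + qnorm Y l y := by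
  simp only [qnorm, mulVec_sub, dotProduct_sub, sub_dotProduct,
    (isSymm_hmat hY l).dotProduct_mulVec_comm y x]
  ring

theorem qnorm_eq_dotProduct_diagonal (hY : Y.IsSymm) (l x : Fin k → ℝ) :
    qnorm Y l x = x ⬝ᵥ diagonal l *ᵥ (Y *ᵥ x) := by
  have hswap : x ⬝ᵥ (Y * diagonal l) *ᵥ x = x ⬝ᵥ diagonal l *ᵥ (Y *ᵥ x) := by
    rw [← mulVec_mulVec, hY.dotProduct_mulVec_comm,
      (isSymm_diagonal l).dotProduct_mulVec_comm, dotProduct_comm]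
  rw [qnorm, hmat, smul_mulVec, add_mulVec, dotProduct_smul, dotProduct_add, hswap,
    ← mulVec_mulVec, smul_eq_mul]
  ring

theorem dotProduct_Pc (hY : Y.IsSymm) (Vs l x : Fin k → ℝ) :
    l ⬝ᵥ Pc Y Vs x = x ⬝ᵥ diagonal l *ᵥ (Y *ᵥ Vs) - qnorm Y l x := by
  have hswap : ∀ w, l ⬝ᵥ diagonal x *ᵥ w = x ⬝ᵥ diagonal l *ᵥ w := fun w => by
    simp only [dotProduct, mulVec_diagonal, mul_left_comm]
  rw [Pc, hswap, mulVec_sub, mulVec_sub, dotProduct_sub, qnorm_eq_dotProduct_diagonal hY]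

theorem hmat_mulVec_phiv (hl : (hmat Y l).PosDef) :
    hmat Y l *ᵥ phiv Y Vs l = (1 / 2 : ℝ) • (diagonal l *ᵥ (Y *ᵥ Vs)) := by
  rw [phiv, mulVec_smul, mulVec_mulVec,
    mul_nonsing_inv _ (isUnit_iff_ne_zero.mpr hl.det_pos.ne'), one_mulVec]

theorem dotProduct_Pc_eq_qnorm_sub (hY : Y.IsSymm) (hl : (hmat Y l).PosDef)
    (x : Fin k → ℝ) :
    l ⬝ᵥ Pc Y Vs x = qnorm Y l (phiv Y Vs l) - qnorm Y l (x - phiv Y Vs l) := by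
  have h : x ⬝ᵥ diagonal l *ᵥ (Y *ᵥ Vs) = 2 * (x ⬝ᵥ hmat Y l *ᵥ phiv Y Vs l) := by
    rw [hmat_mulVec_phiv hl, dotProduct_smul, smul_eq_mul]
    ring
  rw [dotProduct_Pc hY, qnorm_sub hY, h]
  ring

theorem Pc_mem_Hset (hY : Y.IsSymm) (hl : (hmat Y l).PosDef) (x : Fin k → ℝ) :
    Pc Y Vs x ∈ Hset Y Vs l := by
  have h := hl.posSemidef.dotProduct_mulVec_nonneg (x - phiv Y Vs l)
  rw [star_trivial] at h
  show l ⬝ᵥ Pc Y Vs x ≤ _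
  rw [dotProduct_Pc_eq_qnorm_sub hY hl]
  exact sub_le_self _ h

theorem dotProduct_Pc_phiv (hY : Y.IsSymm) (hl : (hmat Y l).PosDef) :
    l ⬝ᵥ Pc Y Vs (phiv Y Vs l) = qnorm Y l (phiv Y Vs l) := by
  rw [dotProduct_Pc_eq_qnorm_sub hY hl, sub_self]
  simp [qnorm]

theorem phiv_nonneg (hY : IsZmat Y) (hl : (hmat Y l).PosDef) (hl₀ : 0 ≤ l)
    (hI : 0 ≤ Y *ᵥ Vs) : 0 ≤ phiv Y Vs l := by
  refine (isZmat_hmat hY hl₀).nonneg_of_mulVec_nonneg hl ?_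
  rw [hmat_mulVec_phiv hl]
  exact smul_nonneg (by norm_num) fun i => by
    simpa [mulVec_diagonal] using mul_nonneg (hl₀ i) (hI i)

theorem phiv_smul (hl : (hmat Y l).PosDef) {s : ℝ} (hs : s ≠ 0) :
    phiv Y Vs (s • l) = phiv Y Vs l := by
  have hinv : (s • hmat Y l)⁻¹ = s⁻¹ • (hmat Y l)⁻¹ :=
    inv_smul' _ (Units.mk0 s hs) (isUnit_iff_ne_zero.mpr hl.det_pos.ne')
  rw [phiv, phiv, hmat_smul, hinv, diagonal_smul, smul_mulVec, smul_mulVec, mulVec_smul,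
    smul_smul, smul_smul, mul_assoc, inv_mul_cancel₀ hs, mul_one]

theorem Hset_smul (hl : (hmat Y l).PosDef) {s : ℝ} (hs : 0 < s) :
    Hset Y Vs (s • l) = Hset Y Vs l := by
  ext y
  simp only [Hset, mem_ofPred_eq, phiv_smul hl hs.ne', qnorm_smul_left, smul_dotProduct,
    smul_eq_mul, mul_le_mul_iff_right₀ hs]

theorem convex_Hset (Y : Matrix (Fin k) (Fin k) ℝ) (Vs l : Fin k → ℝ) :
    Convex ℝ (Hset Y Vs l) :=
  convex_halfSpace_le ⟨dotProduct_add l, fun r y => dotProduct_smul r l y⟩ _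

theorem isClosed_Hset (Y : Matrix (Fin k) (Fin k) ℝ) (Vs l : Fin k → ℝ) :
    IsClosed (Hset Y Vs l) :=
  isClosed_le (continuous_const.dotProduct continuous_id) continuous_const

theorem closure_convexHull_range_Pc_subset_iInter_Hset (hY : Y.IsSymm) :
    closure (convexHull ℝ (range (Pc Y Vs))) ⊆ ⋂ l ∈ Lam1 Y, Hset Y Vs l :=
  closure_minimal
    (convexHull_min
      (range_subset_iff.mpr fun x => mem_iInter₂.mpr fun _ hl => Pc_mem_Hset hY hl.1 x)
      (convex_iInter₂ fun l _ => convex_Hset Y Vs l))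
    (isClosed_biInter fun l _ => isClosed_Hset Y Vs l)

theorem continuous_Pc (Y : Matrix (Fin k) (Fin k) ℝ) (Vs : Fin k → ℝ) : Continuous (Pc Y Vs) := by
  unfold Pc
  fun_prop

end PowerFlow

section Separation

variable {Y : Matrix (Fin k) (Fin k) ℝ} {Vs c : Fin k → ℝ} {u : ℝ}

theorem dotProduct_Pc_le_of_nonneg (h : ∀ x, (∀ i, 0 < x i) → c ⬝ᵥ Pc Y Vs x ≤ u)
    {x : Fin k → ℝ} (hx : 0 ≤ x) : c ⬝ᵥ Pc Y Vs x ≤ u := by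
  have hcont : Continuous fun ε : ℝ => c ⬝ᵥ Pc Y Vs (x + ε • 1) :=
    continuous_const.dotProduct
      ((continuous_Pc Y Vs).comp (continuous_const.add (continuous_id.smul continuous_const)))
  have hlim : Tendsto (fun ε : ℝ => c ⬝ᵥ Pc Y Vs (x + ε • 1)) (𝓝[>] 0)
      (𝓝 (c ⬝ᵥ Pc Y Vs x)) := by
    simpa using (hcont.tendsto 0).mono_left nhdsWithin_le_nhds
  refine le_of_tendsto hlim
    (eventually_nhdsWithin_of_forall fun ε (hε : 0 < ε) => h _ fun i => ?_)
  simpa using add_pos_of_nonneg_of_pos (hx i) hε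

theorem qnorm_nonneg_of_dotProduct_Pc_le (hY : Y.IsSymm)
    (h : ∀ x, 0 ≤ x → c ⬝ᵥ Pc Y Vs x ≤ u) {v : Fin k → ℝ} (hv : 0 ≤ v) : 0 ≤ qnorm Y c v :=
  nonneg_of_forall_mul_sub_mul_sq_le (b := v ⬝ᵥ diagonal c *ᵥ (Y *ᵥ Vs)) fun t ht => by
    have h := h (t • v) (smul_nonneg ht.le hv)
    rw [dotProduct_Pc hY, qnorm_smul_right, smul_dotProduct, smul_eq_mul] at h
    linarith

theorem nonneg_of_qnorm_nonneg (hPD : Y.PosDef) (h : ∀ v, 0 ≤ v → 0 ≤ qnorm Y c v) :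
    0 ≤ c := fun i => by
  have hi := h (Pi.single i 1) (Pi.single_nonneg.mpr zero_le_one)
  rw [qnorm_single] at hi
  exact nonneg_of_mul_nonneg_left hi hPD.diag_pos

theorem posDef_hmat_add_smul_one (hPD : Y.PosDef) (hZ : IsZmat Y) (hc : 0 ≤ c)
    (hcop : ∀ v, 0 ≤ v → 0 ≤ qnorm Y c v) {t : ℝ} (ht : 0 < t) :
    (hmat Y (c + t • 1)).PosDef := by
  have hpsd : (hmat Y c).PosSemidef :=
    .of_dotProduct_mulVec_nonneg
      (isHermitian_iff_isSymm.mpr (isSymm_hmat (isHermitian_iff_isSymm.mp hPD.1) c))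
      fun v => by
        rw [star_trivial]
        exact (isZmat_hmat hZ hc).dotProduct_mulVec_nonneg_of_copositive hcop v
  rw [hmat_add, hmat_smul, hmat_one]
  exact PosDef.posSemidef_add hpsd (hPD.smul ht)

theorem mem_Hset_of_mem_iInter_Hset [NeZero k] {l y : Fin k → ℝ}
    (hl : (hmat Y l).PosDef) (hpos : ∀ i, 0 < l i) (hy : y ∈ ⋂ l ∈ Lam1 Y, Hset Y Vs l) :
    y ∈ Hset Y Vs l := by
  have hsum : 0 < ∑ i, l i := Finset.sum_pos (fun i _ => hpos i) Finset.univ_nonempty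
  have hs : 0 < (∑ i, l i)⁻¹ := inv_pos.mpr hsum
  have hmem : (∑ i, l i)⁻¹ • l ∈ Lam1 Y := by
    refine ⟨?_, fun i => mul_pos hs (hpos i), ?_⟩
    · rw [hmat_smul]
      exact hl.smul hs
    · simp only [Pi.smul_apply, smul_eq_mul, ← Finset.mul_sum, inv_mul_cancel₀ hsum.ne']
  simpa only [Hset_smul hl hs] using mem_iInter₂.mp hy _ hmem

theorem dotProduct_le_of_mem_iInter_Hset [NeZero k] (hPD : Y.PosDef) (hZ : IsZmat Y)
    (hI : 0 ≤ Y *ᵥ Vs) (hF : ∀ P ∈ Fset Y Vs, c ⬝ᵥ P ≤ u) {y : Fin k → ℝ}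
    (hy : y ∈ ⋂ l ∈ Lam1 Y, Hset Y Vs l) : c ⬝ᵥ y ≤ u := by
  have hY : Y.IsSymm := isHermitian_iff_isSymm.mp hPD.1
  have hle : ∀ x, 0 ≤ x → c ⬝ᵥ Pc Y Vs x ≤ u :=
    fun x => dotProduct_Pc_le_of_nonneg fun x hx => hF _ ⟨x, hx, rfl⟩
  have hcop : ∀ v, 0 ≤ v → 0 ≤ qnorm Y c v := fun v => qnorm_nonneg_of_dotProduct_Pc_le hY hle
  have hc : 0 ≤ c := nonneg_of_qnorm_nonneg hPD hcop
  by_contra! hyu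
  -- `c` itself need not lie in `Λ`; perturb it to `λ = c + t • 1` with `t > 0` small
  set M₀ := qnorm Y 1 (phiv Y Vs 1)
  obtain ⟨t, htlt, ht⟩ : ∃ t, t * (M₀ - 1 ⬝ᵥ y) < c ⬝ᵥ y - u ∧ 0 < t := by
    have hlim : Tendsto (fun t : ℝ => t * (M₀ - 1 ⬝ᵥ y)) (𝓝[>] 0) (𝓝 0) := by
      simpa using
        ((continuous_mul_const (M₀ - 1 ⬝ᵥ y)).tendsto (0 : ℝ)).mono_left nhdsWithin_le_nhds
    exact ((hlim.eventually (gt_mem_nhds (sub_pos.mpr hyu))).and self_mem_nhdsWithin).exists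
  have hlPD := posDef_hmat_add_smul_one hPD hZ hc hcop ht
  have hlpos : ∀ i, 0 < (c + t • 1) i := fun i => by
    simpa using add_pos_of_nonneg_of_pos (hc i) ht
  have hφ := phiv_nonneg hZ hlPD (fun i => (hlpos i).le) hI
  have hq : qnorm Y (c + t • 1) (phiv Y Vs (c + t • 1)) ≤ u + t * M₀ := by
    rw [← dotProduct_Pc_phiv hY hlPD, add_dotProduct, smul_dotProduct, smul_eq_mul]
    have h₁ : 1 ⬝ᵥ Pc Y Vs (phiv Y Vs (c + t • 1)) ≤ M₀ :=
      Pc_mem_Hset hY (by rwa [hmat_one]) _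
    linarith [hle _ hφ, mul_le_mul_of_nonneg_left h₁ ht.le]
  have hyl : (c + t • 1) ⬝ᵥ y ≤ _ := mem_Hset_of_mem_iInter_Hset hlPD hlpos hy
  rw [add_dotProduct, smul_dotProduct, smul_eq_mul] at hyl
  linarith

theorem iInter_Hset_subset_closure_convexHull_Fset [NeZero k] (hPD : Y.PosDef) (hZ : IsZmat Y)
    (hI : 0 ≤ Y *ᵥ Vs) : ⋂ l ∈ Lam1 Y, Hset Y Vs l ⊆ closure (convexHull ℝ (Fset Y Vs)) := by
  intro y hy
  by_contra hy'
  obtain ⟨f, u, hf, hfy⟩ :=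
    geometric_hahn_banach_closed_point (convex_convexHull ℝ _).closure isClosed_closure hy'
  obtain ⟨c, hc⟩ : ∃ c, ∀ z, f z = c ⬝ᵥ z := exists_dotProduct_eq f.toLinearMap
  have hF : ∀ P ∈ Fset Y Vs, c ⬝ᵥ P ≤ u := fun P hP =>
    (hc P ▸ hf P (subset_closure (subset_convexHull ℝ _ hP))).le
  have := dotProduct_le_of_mem_iInter_Hset hPD hZ hI hF hy
  rw [hc] at hfy
  linarith

end Separation

theorem stmt_12_general (n : ℕ) (hn : 1 ≤ n)
    (Y : Matrix (Fin n) (Fin n) ℝ)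
    (hPD : Y.PosDef)
    (hZ : IsZmat Y)
    (Vs : Fin n → ℝ)
    (hInn : ∀ i, 0 ≤ (Y *ᵥ Vs) i) :
    closure (convexHull ℝ (Fset Y Vs)) = closure (convexHull ℝ (Set.range (Pc Y Vs))) ∧
    closure (convexHull ℝ (Fset Y Vs)) = ⋂ l ∈ Lam1 Y, Hset Y Vs l := by
  have : NeZero n := ⟨by omega⟩
  have hsub : closure (convexHull ℝ (Fset Y Vs)) ⊆ closure (convexHull ℝ (range (Pc Y Vs))) :=
    closure_mono (convexHull_mono fun _ ⟨x, _, hx⟩ => ⟨x, hx⟩)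
  have hrange := closure_convexHull_range_Pc_subset_iInter_Hset (Vs := Vs)
    (isHermitian_iff_isSymm.mp hPD.1)
  have hH := iInter_Hset_subset_closure_convexHull_Fset hPD hZ hInn
  exact ⟨hsub.antisymm (hrange.trans hH), (hsub.trans hrange).antisymm hH⟩

theorem stmt_12 (n : ℕ) (hn : 1 ≤ n)
    (Y : Matrix (Fin n) (Fin n) ℝ)
    (hPD : Y.PosDef)
    (hZ : IsZmat Y)
    (hirr : IsIrred Y)
    (Vs : Fin n → ℝ) (hVs : ∀ i, 0 < Vs i)
    (hInn : ∀ i, 0 ≤ (Y *ᵥ Vs) i) (hIne : Y *ᵥ Vs ≠ 0) :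
    closure (convexHull ℝ (Fset Y Vs)) = closure (convexHull ℝ (Set.range (Pc Y Vs))) ∧
    closure (convexHull ℝ (Fset Y Vs)) = ⋂ l ∈ Lam1 Y, Hset Y Vs l :=
  stmt_12_general n hn Y hPD hZ Vs hInn
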